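/- arXiv:1805.07057 — 3 statements merged into one kernel-verified Lean document; each statement's English description precedes it below -/
import Mathlib

section
/- Let $(x_n)_{n=0}^N$ be a real-valued martingale with respect to a filtration $(\mathcal F_n)_{n=0}^N$ on a probability space, with square function $S_n(x) = (\sum_{k=0}^n dx_k^2)^{1/2}$ where $dx_0 = x_0$, $dx_k = x_k - x_{k-1}$. Let $\mu = \inf\{n : S_n(x) \ge 1\}$ (with $\inf\emptyset = \infty$). Then $\mathbb E\big[(S_N^2(x) - 1)\,\mathbf 1_{\{\mu \le N\}}\big] \le \mathbb E\big[(x_N^2 + (dx_N^*)^2)\,\mathbf 1_{\{\mu \le N\}}\big]$, where $dx_N^* = \max_{0\le n\le N}|dx_n|$. -/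
/-!
Let `τ` be the first time the square function reaches `1`. On `{τ = m}` split
`S_N² - 1 = (S_m² - 1) + (S_N² - S_m²)`. Since `S_{m-1} < 1` there, the first summand is at most
`dx_m² ≤ (dx_N^*)²`. Since `{τ = m} ∈ ℱ_m` and martingale increments are orthogonal in `L²`,
`E[S_N² - S_m²; τ = m] = E[x_N² - x_m²; τ = m] ≤ E[x_N²; τ = m]`. Sum over `m ≤ N`.
-/

open MeasureTheory Finset

lemma sq_le_sq_sup'_abs {ι : Type*} {s : Finset ι} {hs : s.Nonempty} (f : ι → ℝ) {i : ι}
    (hi : i ∈ s) : f i ^ 2 ≤ s.sup' hs (fun n => |f n|) ^ 2 := by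
  rw [← sq_abs]
  exact pow_le_pow_left₀ (abs_nonneg _) (le_sup' (fun n => |f n|) hi) 2

lemma sq_sup'_abs_le_sum_sq {ι : Type*} {s : Finset ι} (hs : s.Nonempty) (f : ι → ℝ) :
    s.sup' hs (fun n => |f n|) ^ 2 ≤ ∑ n ∈ s, f n ^ 2 := by
  obtain ⟨i, hi, heq⟩ := exists_mem_eq_sup' hs fun n => |f n|
  rw [heq, sq_abs]
  exact single_le_sum (fun n _ => sq_nonneg (f n)) hi

namespace MeasureTheory

variable {Ω : Type*}

def increments (x : ℕ → Ω → ℝ) : ℕ → Ω → ℝ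
  | 0 => x 0
  | k + 1 => x (k + 1) - x k

def quadraticVariation (x : ℕ → Ω → ℝ) (n : ℕ) (ω : Ω) : ℝ :=
  ∑ k ∈ range (n + 1), increments x k ω ^ 2

lemma quadraticVariation_succ (x : ℕ → Ω → ℝ) (n : ℕ) (ω : Ω) :
    quadraticVariation x (n + 1) ω = quadraticVariation x n ω + (x (n + 1) ω - x n ω) ^ 2 :=
  sum_range_succ _ _

lemma quadraticVariation_sub_one_le_increments_sq {x : ℕ → Ω → ℝ} {m : ℕ} {ω : Ω}
    (h : ∀ j < m, quadraticVariation x j ω < 1) :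
    quadraticVariation x m ω - 1 ≤ increments x m ω ^ 2 := by
  cases m with
  | zero => simp [quadraticVariation]
  | succ j =>
    rw [quadraticVariation_succ]
    show _ ≤ (x (j + 1) ω - x j ω) ^ 2
    linarith [h j j.lt_succ_self]

section Measurability

variable [m0 : MeasurableSpace Ω] {ℱ : Filtration ℕ m0} {x : ℕ → Ω → ℝ}

lemma Adapted.increments (hx : Adapted ℱ x) : Adapted ℱ (increments x)
  | 0 => hx 0
  | k + 1 => (hx (k + 1)).sub (hx.measurable_le k.le_succ)

lemma Adapted.quadraticVariation (hx : Adapted ℱ x) : Adapted ℱ (quadraticVariation x) :=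
  fun _ => Finset.measurable_sum _ fun _ hk =>
    (hx.increments.measurable_le (Nat.lt_succ_iff.mp (mem_range.mp hk))).pow_const 2

end Measurability

section Lp

variable [MeasurableSpace Ω] {μ : Measure Ω} {x : ℕ → Ω → ℝ} {p : ENNReal}

lemma memLp_increments (h : ∀ k, MemLp (x k) p μ) : ∀ k, MemLp (increments x k) p μ
  | 0 => h 0
  | k + 1 => (h (k + 1)).sub (h k)

lemma memLp_of_memLp_increments (h : ∀ k, MemLp (increments x k) p μ) : ∀ k, MemLp (x k) p μ
  | 0 => h 0
  | k + 1 => by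
    simpa [increments] using (memLp_of_memLp_increments h k).add (h (k + 1))

lemma integrable_quadraticVariation (h : ∀ k, MemLp (x k) 2 μ) (n : ℕ) :
    Integrable (quadraticVariation x n) μ :=
  integrable_finsetSum _ fun k _ => (memLp_increments h k).integrable_sq

lemma integrable_sup'_abs_increments_sq (hmeas : ∀ k, Measurable (increments x k))
    (h : ∀ k, MemLp (x k) 2 μ) (N : ℕ) :
    Integrable (fun ω => (range (N + 1)).sup' nonempty_range_add_one
      (fun n => |increments x n ω|) ^ 2) μ := by
  refine (integrable_quadraticVariation h N).mono'
    ((measurable_range_sup'' fun k _ => (hmeas k).abs).pow_const 2).aestronglyMeasurable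
    (ae_of_all _ fun ω => ?_)
  rw [Real.norm_of_nonneg (sq_nonneg _)]
  exact sq_sup'_abs_le_sum_sq _ _

end Lp

lemma integral_setOf_le_eq_sum {E : Type*} [NormedAddCommGroup E] [NormedSpace ℝ E]
    [MeasurableSpace Ω] {μ : Measure Ω} {τ : Ω → WithTop ℕ}
    (hτ : ∀ m : ℕ, MeasurableSet {ω | τ ω = m}) {f : Ω → E} (hf : Integrable f μ) (N : ℕ) :
    ∫ ω in {ω | τ ω ≤ N}, f ω ∂μ = ∑ m ∈ range (N + 1), ∫ ω in {ω | τ ω = m}, f ω ∂μ := by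
  have hunion : {ω | τ ω ≤ N} = ⋃ m ∈ range (N + 1), {ω | τ ω = m} := by
    ext ω
    simp only [Set.mem_ofPred_eq, Set.mem_iUnion, exists_prop, mem_range, Nat.lt_succ_iff]
    generalize τ ω = t
    induction t using WithTop.recTopCoe <;> simp
  have hdisj : Set.PairwiseDisjoint ↑(range (N + 1)) fun m : ℕ => {ω | τ ω = m} :=
    fun i _ j _ hij => Set.disjoint_left.2 fun ω hi hj => hij (by simp_all)
  rw [hunion, integral_biUnion_finset _ (fun m _ => hτ m) hdisj fun _ _ => hf.integrableOn]

section Martingale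

variable [m0 : MeasurableSpace Ω] {μ : Measure Ω} [IsFiniteMeasure μ]

lemma Martingale.setIntegral_mul_eq {ι : Type*} [Preorder ι] {ℱ : Filtration ι m0}
    {x : ι → Ω → ℝ} (hx : Martingale x ℱ μ) {i j : ι} (hij : i ≤ j) {Y : Ω → ℝ}
    (hY : StronglyMeasurable[ℱ i] Y) (hYx : Integrable (Y * x j) μ) {B : Set Ω}
    (hB : MeasurableSet[ℱ i] B) :
    ∫ ω in B, Y ω * x j ω ∂μ = ∫ ω in B, Y ω * x i ω ∂μ := by
  calc ∫ ω in B, Y ω * x j ω ∂μ = ∫ ω in B, (μ[Y * x j | ℱ i]) ω ∂μ :=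
        (setIntegral_condExp (ℱ.le i) hYx hB).symm
    _ = ∫ ω in B, Y ω * x i ω ∂μ := setIntegral_congr_ae (ℱ.le i B hB) ?_
  filter_upwards [condExp_mul_of_stronglyMeasurable_left hY hYx (hx.integrable j),
    hx.condExp_ae_eq hij] with ω hpull hmart _
  rw [hpull, Pi.mul_apply, hmart]

lemma Martingale.setIntegral_sq_sub {ι : Type*} [Preorder ι] {ℱ : Filtration ι m0}
    {x : ι → Ω → ℝ} (hx : Martingale x ℱ μ) {i j : ι} (hij : i ≤ j) (hi : MemLp (x i) 2 μ)
    (hj : MemLp (x j) 2 μ) {B : Set Ω} (hB : MeasurableSet[ℱ i] B) :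
    ∫ ω in B, (x j ω - x i ω) ^ 2 ∂μ = ∫ ω in B, x j ω ^ 2 ∂μ - ∫ ω in B, x i ω ^ 2 ∂μ := by
  have hij_int : Integrable (x i * x j) μ := hi.integrable_mul hj
  have hcross := hx.setIntegral_mul_eq hij (hx.stronglyAdapted i) hij_int hB
  calc ∫ ω in B, (x j ω - x i ω) ^ 2 ∂μ
        = ∫ ω in B, (x j ω ^ 2 - 2 * (x i ω * x j ω) + x i ω ^ 2) ∂μ := by
          congr 1; ext ω; ring
    _ = ∫ ω in B, x j ω ^ 2 ∂μ - 2 * ∫ ω in B, x i ω * x j ω ∂μ + ∫ ω in B, x i ω ^ 2 ∂μ := by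
          rw [integral_add, integral_sub, integral_const_mul]
          · exact hj.integrable_sq.integrableOn
          · exact (hij_int.const_mul 2).integrableOn
          · exact (hj.integrable_sq.sub (hij_int.const_mul 2)).integrableOn
          · exact hi.integrable_sq.integrableOn
    _ = ∫ ω in B, x j ω ^ 2 ∂μ - ∫ ω in B, x i ω ^ 2 ∂μ := by
          rw [hcross]; simp_rw [← sq]; ring

variable {ℱ : Filtration ℕ m0} {x : ℕ → Ω → ℝ}

lemma Martingale.setIntegral_quadraticVariation_sub (hx : Martingale x ℱ μ)
    (hL2 : ∀ k, MemLp (x k) 2 μ) {m n : ℕ} (hmn : m ≤ n) {B : Set Ω}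
    (hB : MeasurableSet[ℱ m] B) :
    ∫ ω in B, (quadraticVariation x n ω - quadraticVariation x m ω) ∂μ
      = ∫ ω in B, x n ω ^ 2 ∂μ - ∫ ω in B, x m ω ^ 2 ∂μ := by
  induction n, hmn using Nat.le_induction with
  | base => simp
  | succ n hmn ih =>
    have hqv := integrable_quadraticVariation hL2
    have hsq : Integrable (fun ω => (x (n + 1) ω - x n ω) ^ 2) μ :=
      ((hL2 (n + 1)).sub (hL2 n)).integrable_sq
    simp_rw [quadraticVariation_succ, add_sub_right_comm]
    rw [integral_add ?_ hsq.integrableOn, ih,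
      hx.setIntegral_sq_sub n.le_succ (hL2 n) (hL2 (n + 1)) (ℱ.mono hmn B hB)]
    · ring
    · exact ((hqv n).sub (hqv m)).integrableOn

lemma Martingale.setIntegral_quadraticVariation_sub_one_le (hx : Martingale x ℱ μ)
    (hL2 : ∀ k, MemLp (x k) 2 μ) {m N : ℕ} (hmN : m ≤ N) {B : Set Ω}
    (hB : MeasurableSet[ℱ m] B) {g : Ω → ℝ} (hg : Integrable g μ)
    (hle : ∀ ω ∈ B, quadraticVariation x m ω - 1 ≤ g ω) :
    ∫ ω in B, (quadraticVariation x N ω - 1) ∂μ ≤ ∫ ω in B, (x N ω ^ 2 + g ω) ∂μ := by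
  have hB' : MeasurableSet B := ℱ.le m B hB
  have hqv := integrable_quadraticVariation hL2
  calc ∫ ω in B, (quadraticVariation x N ω - 1) ∂μ
        = ∫ ω in B, (quadraticVariation x m ω - 1) ∂μ
          + ∫ ω in B, (quadraticVariation x N ω - quadraticVariation x m ω) ∂μ := by
          rw [← integral_add ?_ ?_]
          · congr 1; ext ω; ring
          · exact ((hqv m).sub (integrable_const 1)).integrableOn
          · exact ((hqv N).sub (hqv m)).integrableOn
    _ ≤ ∫ ω in B, g ω ∂μ + ∫ ω in B, x N ω ^ 2 ∂μ := by
          gcongr ?_ + ?_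
          · exact setIntegral_mono_on ((hqv m).sub (integrable_const 1)).integrableOn
              hg.integrableOn hB' hle
          · rw [hx.setIntegral_quadraticVariation_sub hL2 hmN hB]
            linarith [setIntegral_nonneg (μ := μ) hB' fun ω _ => sq_nonneg (x m ω)]
    _ = ∫ ω in B, (x N ω ^ 2 + g ω) ∂μ := by
          rw [integral_add (hL2 N).integrable_sq.integrableOn hg.integrableOn, add_comm]

end Martingale

end MeasureTheory

open MeasureTheory

theorem square_function_auxiliary_bound_general
    {Ω : Type*} [m0 : MeasurableSpace Ω] {μ : Measure Ω} [IsProbabilityMeasure μ]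
    (ℱ : Filtration ℕ m0) (x : ℕ → Ω → ℝ) (hx : Martingale x ℱ μ) (N : ℕ)
    (dx : ℕ → Ω → ℝ) (hdx0 : dx 0 = x 0)
    (hdx : ∀ k : ℕ, dx (k + 1) = x (k + 1) - x k)
    (S : ℕ → Ω → ℝ)
    (hS : ∀ n ω, S n ω = Real.sqrt (∑ k ∈ Finset.range (n + 1), dx k ω ^ 2))
    (hint : ∀ k, Integrable (fun ω => dx k ω ^ 2) μ) :
    ∫ ω in {ω | ∃ n ≤ N, 1 ≤ S n ω}, (S N ω ^ 2 - 1) ∂μ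
      ≤ ∫ ω in {ω | ∃ n ≤ N, 1 ≤ S n ω},
          (x N ω ^ 2
            + ((Finset.range (N + 1)).sup' (Finset.nonempty_range_add_one)
                (fun n => |dx n ω|)) ^ 2) ∂μ := by
  obtain rfl : dx = increments x := funext fun k => by cases k <;> simp [increments, hdx0, hdx]
  have hadapted : Adapted ℱ x := hx.stronglyAdapted.adapted
  have hdx_meas : ∀ k, Measurable (increments x k) := fun _ => hadapted.increments.measurable
  have hL2 : ∀ k, MemLp (x k) 2 μ := memLp_of_memLp_increments fun k =>
    (memLp_two_iff_integrable_sq (hdx_meas k).aestronglyMeasurable).2 (hint k)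
  have hD := integrable_sup'_abs_increments_sq hdx_meas hL2 N
  have hSq : ∀ n ω, S n ω ^ 2 = quadraticVariation x n ω := fun n ω => by
    rw [hS]; exact Real.sq_sqrt (sum_nonneg fun _ _ => sq_nonneg _)
  -- the paper's stopping time `μ`
  set τ := hittingAfter (quadraticVariation x) (Set.Ici 1) 0
  have hτ : IsStoppingTime ℱ τ :=
    hadapted.quadraticVariation.isStoppingTime_hittingAfter measurableSet_Ici
  have hA : {ω | ∃ n ≤ N, 1 ≤ S n ω} = {ω | τ ω ≤ N} := by
    ext ω
    refine Iff.trans ?_ hittingAfter_le_iff.symm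
    simp [hS, quadraticVariation]
  have hlevel : ∀ m : ℕ, MeasurableSet {ω | τ ω = m} := fun m => ℱ.le m _ (hτ.measurableSet_eq m)
  simp_rw [hA, hSq]
  rw [integral_setOf_le_eq_sum hlevel ?_ N, integral_setOf_le_eq_sum hlevel ?_ N]
  · refine sum_le_sum fun m hm => hx.setIntegral_quadraticVariation_sub_one_le hL2
      (mem_range_succ_iff.1 hm) (hτ.measurableSet_eq m) hD fun ω (hω : τ ω = m) => ?_
    calc quadraticVariation x m ω - 1 ≤ increments x m ω ^ 2 :=
          quadraticVariation_sub_one_le_increments_sq fun j hj =>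
            not_le.1 (notMem_of_lt_hittingAfter
              ((WithTop.coe_lt_coe.2 hj).trans_eq hω.symm) j.zero_le)
      _ ≤ _ := sq_le_sq_sup'_abs (increments x · ω) hm
  · exact (hL2 N).integrable_sq.add hD
  · exact (integrable_quadraticVariation hL2 N).sub (integrable_const 1)

/-- Auxiliary good-λ bound for the square function of a discrete real martingale:
`E[(S_N² - 1) 1_{μ ≤ N}] ≤ E[(x_N² + (dx_N^*)²) 1_{μ ≤ N}]`, where
`{μ ≤ N} = {∃ n ≤ N, S_n ≥ 1}`. -/
theorem square_function_auxiliary_bound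
    {Ω : Type*} [m0 : MeasurableSpace Ω] {μ : Measure Ω} [IsProbabilityMeasure μ]
    (ℱ : Filtration ℕ m0) (x : ℕ → Ω → ℝ) (hx : Martingale x ℱ μ) (N : ℕ)
    (dx : ℕ → Ω → ℝ) (hdx0 : dx 0 = x 0)
    (hdx : ∀ k : ℕ, dx (k + 1) = x (k + 1) - x k)
    (S : ℕ → Ω → ℝ)
    (hS : ∀ n ω, S n ω = Real.sqrt (∑ k ∈ Finset.range (n + 1), dx k ω ^ 2))
    (hint : ∀ k, Integrable (fun ω => dx k ω ^ 2) μ)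
    (hxint : Integrable (fun ω => x N ω ^ 2) μ) :
    ∫ ω in {ω | ∃ n ≤ N, 1 ≤ S n ω}, (S N ω ^ 2 - 1) ∂μ
      ≤ ∫ ω in {ω | ∃ n ≤ N, 1 ≤ S n ω},
          (x N ω ^ 2
            + ((Finset.range (N + 1)).sup' (Finset.nonempty_range_add_one)
                (fun n => |dx n ω|)) ^ 2) ∂μ :=
  square_function_auxiliary_bound_general (m0 := m0) ℱ x hx N dx hdx0 hdx S hS hint
end

section
/- Let $m$ be the infinite zero-one matrix with entries $m_{ij} = 1$ if ($j$ is even and $i \le j$) or ($i$ is even and $j \le i$), and $m_{ij} = 0$ otherwise. Let $t$ be the map on infinite matrices inserting a zero column before the first column and interleaving zero rows and columns: $t(A)_{2i, 2j} = a_{ij}$ and all other entries $0$. Let $T$ be the upper triangular projection, $(TA)_{ij} = a_{ij}$ if $i \le j$ and $0$ otherwise. Then $m * t(A) = t(T(A))$ for every matrix $A$, where $*$ denotes entrywise (Schur) product. -/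
/-- Schur multiplication of the reversed-`L` zero-one matrix `m` against the
interleaving embedding `t(A)` recovers the embedded upper-triangular truncation:
`m * t(A) = t(T(A))` entrywise.  Indices are `1`-based: `m i j = 1` iff
(`j` is even and `i ≤ j`) or (`i` is even and `j ≤ i`); the embedding `t` inserts a zero
column in front and interleaves zero rows and columns, placing `A i j` at position
`(2i - 1, 2j)`; `T` is the upper-triangular projection. -/
theorem schur_multiplier_triangular_identity
    (A : ℕ → ℕ → ℝ)
    (m : ℕ → ℕ → ℝ)
    (hm : ∀ i j, m i j = if (Even j ∧ i ≤ j) ∨ (Even i ∧ j ≤ i) then 1 else 0)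
    (t : (ℕ → ℕ → ℝ) → (ℕ → ℕ → ℝ))
    (ht : ∀ (C : ℕ → ℕ → ℝ) (p q : ℕ),
      t C p q = if Odd p ∧ Even q ∧ q ≠ 0 then C ((p + 1) / 2) (q / 2) else 0)
    (T : (ℕ → ℕ → ℝ) → (ℕ → ℕ → ℝ))
    (hT : ∀ (C : ℕ → ℕ → ℝ) (i j : ℕ), T C i j = if i ≤ j then C i j else 0) :
    ∀ i j, m i j * t A i j = t (T A) i j := by
  intro i j
  rw [hm, ht, ht, hT]
  split_ifs with h1 h2 h3 h4 h5 <;> try ring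
  all_goals
    exfalso
    simp only [Nat.even_iff, Nat.odd_iff, not_or, not_and_or] at *
    omega
end

section
/- Let $(x_n)_{n=0}^N$ be a real-valued martingale and suppose the good-$\lambda$ type inequality $\lambda^2\,\mathbb P(S_N(x) \ge \beta\lambda) \le C\,\mathbb E\big[x_N^2\,\mathbf 1_{\{S_N(x) \ge \lambda\}}\big]$ holds for all $\lambda > 0$, where $\beta > 1$ and $C > 0$ are constants. Then for every $p > 2$ with $\mathbb E[S_N(x)^p] < \infty$, $\mathbb E[S_N(x)^p] \le \frac{p}{p-2}\,\frac{\beta^p C}{1}\,\mathbb E\big[S_N(x)^{p-2} x_N^2\big]$, and consequently $\|S_N(x)\|_{L^p} \le \big(\frac{p\,\beta^p C}{p-2}\big)^{1/2} \|x_N\|_{L^p}$. -/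
/-!
By the layer-cake formula, `∫ S^p = β^p p ∫₀^∞ λ^(p-1) μ(S ≥ βλ) dλ`. The good-λ inequality bounds
the integrand by `C λ^(p-3) ∫_{S ≥ λ} x²`, and exchanging the integrals with
`∫₀^S λ^(p-3) dλ = S^(p-2)/(p-2)` gives `∫ S^p ≤ p/(p-2) β^p C ∫ S^(p-2) x²`. Hölder's inequality
with exponents `p/(p-2)` and `p/2` bounds the right-hand side by
`p/(p-2) β^p C (∫ S^p)^((p-2)/p) (∫ |x|^p)^(2/p)`; since `∫ S^p` is finite, it can be absorbed.
-/

open MeasureTheory Finset Set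
open scoped ENNReal

section

variable {Ω : Type*} [MeasurableSpace Ω] {μ : Measure Ω}

theorem lintegral_rpow_eq_lintegral_meas_le_mul {f : Ω → ℝ} (hf0 : 0 ≤ᵐ[μ] f)
    (hf : AEMeasurable f μ) {p : ℝ} (hp : 0 < p) :
    ∫⁻ ω, ENNReal.ofReal (f ω ^ p) ∂μ
      = ENNReal.ofReal p * ∫⁻ t in Ioi 0, μ {ω | t ≤ f ω} * ENNReal.ofReal (t ^ (p - 1)) := by
  have hint : ∀ t > (0 : ℝ), IntervalIntegrable (fun t : ℝ => t ^ (p - 1)) volume 0 t :=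
    fun _ _ => intervalIntegral.intervalIntegrable_rpow' (by linarith)
  have hnn : ∀ᵐ t ∂volume.restrict (Ioi (0 : ℝ)), 0 ≤ t ^ (p - 1) :=
    ae_restrict_of_forall_mem measurableSet_Ioi fun t ht => Real.rpow_nonneg (le_of_lt ht) _
  rw [← lintegral_comp_eq_lintegral_meas_le_mul μ hf0 hf hint hnn,
    ← lintegral_const_mul' _ _ ENNReal.ofReal_ne_top]
  refine lintegral_congr fun ω => ?_
  rw [integral_rpow (Or.inl (by linarith)), sub_add_cancel, Real.zero_rpow hp.ne', sub_zero,
    ← ENNReal.ofReal_mul hp.le, mul_div_cancel₀ _ hp.ne']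

theorem lintegral_Ioc_zero_rpow {s r : ℝ} (hs : 0 ≤ s) (hr : -1 < r) :
    ∫⁻ t in Ioc 0 s, ENNReal.ofReal (t ^ r) = ENNReal.ofReal (s ^ (r + 1) / (r + 1)) := by
  have hint : IntegrableOn (fun t : ℝ => t ^ r) (Ioc 0 s) :=
    (intervalIntegrable_iff_integrableOn_Ioc_of_le hs).1
      (intervalIntegral.intervalIntegrable_rpow' hr)
  rw [← ofReal_integral_eq_lintegral_ofReal hint
      (ae_restrict_of_forall_mem measurableSet_Ioc fun t ht => Real.rpow_nonneg ht.1.le _),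
    ← intervalIntegral.integral_of_le hs, integral_rpow (Or.inl hr),
    Real.zero_rpow (by linarith), sub_zero]

theorem lintegral_Ioi_mul_setLIntegral_swap [SFinite μ] {φ : ℝ → ℝ≥0∞} (hφ : Measurable φ)
    {f : Ω → ℝ} (hf : Measurable f) {g : Ω → ℝ≥0∞} (hg : Measurable g) :
    ∫⁻ t in Ioi 0, φ t * ∫⁻ ω in {ω | t ≤ f ω}, g ω ∂μ
      = ∫⁻ ω, (∫⁻ t in Ioc 0 (f ω), φ t) * g ω ∂μ := by
  have hF : Measurable (Function.uncurry fun t ω => if t ≤ f ω then φ t * g ω else 0) :=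
    Measurable.ite (measurableSet_le measurable_fst (hf.comp measurable_snd))
      ((hφ.comp measurable_fst).mul (hg.comp measurable_snd)) measurable_const
  calc ∫⁻ t in Ioi 0, φ t * ∫⁻ ω in {ω | t ≤ f ω}, g ω ∂μ
      = ∫⁻ t in Ioi 0, ∫⁻ ω, (if t ≤ f ω then φ t * g ω else 0) ∂μ := by
        refine lintegral_congr fun t => ?_
        rw [← lintegral_const_mul _ hg,
          ← lintegral_indicator (measurableSet_le measurable_const hf)]
        rfl
    _ = ∫⁻ ω, (∫⁻ t in Ioi 0, if t ≤ f ω then φ t * g ω else 0) ∂μ :=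
        lintegral_lintegral_swap hF.aemeasurable
    _ = ∫⁻ ω, (∫⁻ t in Ioc 0 (f ω), φ t) * g ω ∂μ := by
        refine lintegral_congr fun ω => ?_
        rw [← lintegral_mul_const _ hφ, ← Ioi_inter_Iic, inter_comm,
          ← Measure.restrict_restrict measurableSet_Iic,
          ← lintegral_indicator measurableSet_Iic]
        rfl

theorem lintegral_rpow_eq_lintegral_meas_const_mul_le_mul {f : Ω → ℝ} (hf : Measurable f)
    (hf0 : 0 ≤ f) {β p : ℝ} (hβ : 0 < β) (hp : 0 < p) :
    ∫⁻ ω, ENNReal.ofReal (f ω ^ p) ∂μ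
      = ENNReal.ofReal (β ^ p * p)
        * ∫⁻ t in Ioi 0, μ {ω | β * t ≤ f ω} * ENNReal.ofReal (t ^ (p - 1)) := by
  have hsets : ∀ t, {ω | t ≤ f ω / β} = {ω | β * t ≤ f ω} := fun t => by
    simp only [le_div_iff₀ hβ, mul_comm]
  calc ∫⁻ ω, ENNReal.ofReal (f ω ^ p) ∂μ
      = ∫⁻ ω, ENNReal.ofReal (β ^ p) * ENNReal.ofReal ((f ω / β) ^ p) ∂μ := by
        refine lintegral_congr fun ω => ?_
        rw [← ENNReal.ofReal_mul (by positivity), Real.div_rpow (hf0 ω) hβ.le,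
          mul_div_cancel₀ _ (by positivity)]
    _ = _ := by
        rw [lintegral_const_mul' _ _ ENNReal.ofReal_ne_top,
          lintegral_rpow_eq_lintegral_meas_le_mul (.of_forall fun ω => div_nonneg (hf0 ω) hβ.le)
            (hf.div_const β).aemeasurable hp, ← mul_assoc, ← ENNReal.ofReal_mul (by positivity)]
        simp only [hsets]

theorem lintegral_Ioi_rpow_mul_setLIntegral [SFinite μ] {f : Ω → ℝ} (hf : Measurable f)
    (hf0 : 0 ≤ f) {g : Ω → ℝ≥0∞} (hg : Measurable g) {r : ℝ} (hr : -1 < r) :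
    ∫⁻ t in Ioi 0, ENNReal.ofReal (t ^ r) * ∫⁻ ω in {ω | t ≤ f ω}, g ω ∂μ
      = ENNReal.ofReal (r + 1)⁻¹ * ∫⁻ ω, ENNReal.ofReal (f ω ^ (r + 1)) * g ω ∂μ := by
  rw [lintegral_Ioi_mul_setLIntegral_swap (by fun_prop) hf hg,
    ← lintegral_const_mul' _ _ ENNReal.ofReal_ne_top]
  refine lintegral_congr fun ω => ?_
  rw [lintegral_Ioc_zero_rpow (hf0 ω) hr, ← mul_assoc,
    ← ENNReal.ofReal_mul (inv_pos.2 (by linarith)).le, div_eq_inv_mul]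

theorem lintegral_rpow_le_of_goodLambda [SFinite μ] {f : Ω → ℝ} (hf : Measurable f)
    (hf0 : 0 ≤ f) {g : Ω → ℝ≥0∞} (hg : Measurable g) {β C p : ℝ} (hβ : 0 < β) (hp : 2 < p)
    (hgl : ∀ l : ℝ, 0 < l →
      ENNReal.ofReal (l ^ 2) * μ {ω | β * l ≤ f ω}
        ≤ ENNReal.ofReal C * ∫⁻ ω in {ω | l ≤ f ω}, g ω ∂μ) :
    ∫⁻ ω, ENNReal.ofReal (f ω ^ p) ∂μ
      ≤ ENNReal.ofReal (p / (p - 2) * β ^ p * C)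
        * ∫⁻ ω, ENNReal.ofReal (f ω ^ (p - 2)) * g ω ∂μ := by
  have hpt : ∀ t ∈ Ioi (0 : ℝ), μ {ω | β * t ≤ f ω} * ENNReal.ofReal (t ^ (p - 1))
      ≤ ENNReal.ofReal C * (ENNReal.ofReal (t ^ (p - 3)) * ∫⁻ ω in {ω | t ≤ f ω}, g ω ∂μ) := by
    intro t (ht : 0 < t)
    have hsplit : t ^ (p - 1) = t ^ (p - 3) * t ^ 2 := by
      rw [← Real.rpow_natCast, ← Real.rpow_add ht]
      congr 1
      push_cast
      ring
    calc μ {ω | β * t ≤ f ω} * ENNReal.ofReal (t ^ (p - 1))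
        = ENNReal.ofReal (t ^ (p - 3)) * (ENNReal.ofReal (t ^ 2) * μ {ω | β * t ≤ f ω}) := by
          rw [hsplit, ENNReal.ofReal_mul (by positivity)]
          ring
      _ ≤ ENNReal.ofReal (t ^ (p - 3)) * (ENNReal.ofReal C * ∫⁻ ω in {ω | t ≤ f ω}, g ω ∂μ) :=
          mul_le_mul_right (hgl t ht) _
      _ = _ := mul_left_comm _ _ _
  calc ∫⁻ ω, ENNReal.ofReal (f ω ^ p) ∂μ
      = ENNReal.ofReal (β ^ p * p)
        * ∫⁻ t in Ioi 0, μ {ω | β * t ≤ f ω} * ENNReal.ofReal (t ^ (p - 1)) :=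
        lintegral_rpow_eq_lintegral_meas_const_mul_le_mul hf hf0 hβ (by linarith)
    _ ≤ ENNReal.ofReal (β ^ p * p) * ∫⁻ t in Ioi 0,
          ENNReal.ofReal C * (ENNReal.ofReal (t ^ (p - 3)) * ∫⁻ ω in {ω | t ≤ f ω}, g ω ∂μ) :=
        mul_le_mul_right (setLIntegral_mono' measurableSet_Ioi hpt) _
    _ = ENNReal.ofReal (β ^ p * p) * (ENNReal.ofReal C * (ENNReal.ofReal (p - 3 + 1)⁻¹
          * ∫⁻ ω, ENNReal.ofReal (f ω ^ (p - 3 + 1)) * g ω ∂μ)) := by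
        rw [lintegral_const_mul' _ _ ENNReal.ofReal_ne_top,
          lintegral_Ioi_rpow_mul_setLIntegral hf hf0 hg (by linarith)]
    _ = _ := by
        rw [show p - 3 + 1 = p - 2 by ring, ← mul_assoc, ← mul_assoc,
          mul_right_comm (ENNReal.ofReal (β ^ p * p)), ← ENNReal.ofReal_mul (by positivity),
          ← ENNReal.ofReal_mul (by positivity)]
        congr 2
        field_simp

theorem integral_rpow_le_of_goodLambda [IsFiniteMeasure μ] {f g : Ω → ℝ} (hf : Measurable f)
    (hf0 : 0 ≤ f) (hg : Measurable g) (hg0 : 0 ≤ g) {β C p : ℝ} (hβ : 0 < β) (hC : 0 ≤ C)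
    (hp : 2 < p)
    (hgl : ∀ l : ℝ, 0 < l →
      l ^ 2 * (μ {ω | β * l ≤ f ω}).toReal ≤ C * ∫ ω in {ω | l ≤ f ω}, g ω ∂μ)
    (hfp : Integrable (fun ω => f ω ^ p) μ)
    (hfg : Integrable (fun ω => f ω ^ (p - 2) * g ω) μ) :
    ∫ ω, f ω ^ p ∂μ ≤ p / (p - 2) * β ^ p * C * ∫ ω, f ω ^ (p - 2) * g ω ∂μ := by
  have hglE : ∀ l : ℝ, 0 < l →
      ENNReal.ofReal (l ^ 2) * μ {ω | β * l ≤ f ω}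
        ≤ ENNReal.ofReal C * ∫⁻ ω in {ω | l ≤ f ω}, ENNReal.ofReal (g ω) ∂μ := by
    intro l hl
    calc ENNReal.ofReal (l ^ 2) * μ {ω | β * l ≤ f ω}
        = ENNReal.ofReal (l ^ 2 * (μ {ω | β * l ≤ f ω}).toReal) := by
          rw [ENNReal.ofReal_mul (sq_nonneg l), ENNReal.ofReal_toReal (measure_ne_top μ _)]
      _ ≤ ENNReal.ofReal (C * ∫ ω in {ω | l ≤ f ω}, g ω ∂μ) :=
          ENNReal.ofReal_le_ofReal (hgl l hl)
      _ ≤ ENNReal.ofReal C * ∫⁻ ω in {ω | l ≤ f ω}, ENNReal.ofReal (g ω) ∂μ := by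
          rw [ENNReal.ofReal_mul hC, integral_eq_lintegral_of_nonneg_ae (.of_forall hg0)
            hg.aestronglyMeasurable]
          exact mul_le_mul_right ENNReal.ofReal_toReal_le _
  have key := lintegral_rpow_le_of_goodLambda hf hf0 hg.ennreal_ofReal hβ hp hglE
  simp_rw [← ENNReal.ofReal_mul (Real.rpow_nonneg (hf0 _) _)] at key
  rw [← ofReal_integral_eq_lintegral_ofReal hfp (.of_forall fun ω => Real.rpow_nonneg (hf0 ω) p),
    ← ofReal_integral_eq_lintegral_ofReal hfg
      (.of_forall fun ω => mul_nonneg (Real.rpow_nonneg (hf0 ω) _) (hg0 ω)),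
    ← ENNReal.ofReal_mul (by positivity)] at key
  exact (ENNReal.ofReal_le_ofReal_iff (mul_nonneg (by positivity)
    (integral_nonneg fun ω => mul_nonneg (Real.rpow_nonneg (hf0 ω) _) (hg0 ω)))).1 key

theorem integral_rpow_sub_two_mul_sq_le {f u : Ω → ℝ} (hf : Measurable f) (hf0 : 0 ≤ f)
    (hu : Measurable u) {p : ℝ} (hp : 2 < p) (hfp : Integrable (fun ω => f ω ^ p) μ)
    (hup : Integrable (fun ω => |u ω| ^ p) μ) :
    ∫ ω, f ω ^ (p - 2) * u ω ^ 2 ∂μ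
      ≤ (∫ ω, f ω ^ p ∂μ) ^ ((p - 2) / p) * (∫ ω, |u ω| ^ p ∂μ) ^ (2 / p) := by
  have hconj : (p / (p - 2)).HolderConjugate (p / 2) := by
    refine ⟨?_, by positivity, by positivity⟩
    rw [inv_div, inv_div, inv_one, ← add_div, sub_add_cancel, div_self (by positivity)]
  have hF : ∀ ω, ENNReal.ofReal (f ω ^ (p - 2)) ^ (p / (p - 2)) = ENNReal.ofReal (f ω ^ p) := by
    intro ω
    rw [ENNReal.ofReal_rpow_of_nonneg (Real.rpow_nonneg (hf0 ω) _) (by positivity),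
      ← Real.rpow_mul (hf0 ω), mul_div_cancel₀ _ (by linarith)]
  have hG : ∀ ω, ENNReal.ofReal (u ω ^ 2) ^ (p / 2) = ENNReal.ofReal (|u ω| ^ p) := by
    intro ω
    rw [ENNReal.ofReal_rpow_of_nonneg (sq_nonneg _) (by positivity), ← sq_abs,
      ← Real.rpow_natCast, ← Real.rpow_mul (abs_nonneg _), Nat.cast_ofNat,
      mul_div_cancel₀ _ two_ne_zero]
  have holder := ENNReal.lintegral_mul_le_Lp_mul_Lq μ hconj
    (f := fun ω => ENNReal.ofReal (f ω ^ (p - 2))) (g := fun ω => ENNReal.ofReal (u ω ^ 2))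
    (by fun_prop) (by fun_prop)
  simp only [Pi.mul_apply, hF, hG, one_div_div] at holder
  have hI0 : 0 ≤ ∫ ω, f ω ^ p ∂μ := integral_nonneg fun ω => Real.rpow_nonneg (hf0 ω) p
  have hJ0 : 0 ≤ ∫ ω, |u ω| ^ p ∂μ := integral_nonneg fun ω => by positivity
  rw [← ofReal_integral_eq_lintegral_ofReal hfp (.of_forall fun ω => Real.rpow_nonneg (hf0 ω) p),
    ← ofReal_integral_eq_lintegral_ofReal hup (.of_forall fun ω => by positivity),
    ENNReal.ofReal_rpow_of_nonneg hI0 (by positivity),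
    ENNReal.ofReal_rpow_of_nonneg hJ0 (by positivity),
    ← ENNReal.ofReal_mul (Real.rpow_nonneg hI0 _)] at holder
  simp_rw [← ENNReal.ofReal_mul (Real.rpow_nonneg (hf0 _) _)] at holder
  rw [integral_eq_lintegral_of_nonneg_ae
    (.of_forall fun ω => mul_nonneg (Real.rpow_nonneg (hf0 ω) _) (sq_nonneg _)) (by fun_prop)]
  exact ENNReal.toReal_le_of_le_ofReal
    (mul_nonneg (Real.rpow_nonneg hI0 _) (Real.rpow_nonneg hJ0 _)) holder
end

theorem rpow_one_div_le_of_le_mul_rpow {I J K p : ℝ} (hp : p ≠ 0) (hI : 0 ≤ I) (hJ : 0 ≤ J)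
    (hK : 0 ≤ K) (h : I ≤ K * (I ^ ((p - 2) / p) * J ^ (2 / p))) :
    I ^ (1 / p) ≤ K ^ ((1 : ℝ) / 2) * J ^ (1 / p) := by
  rcases hI.eq_or_lt with rfl | hI
  · rw [Real.zero_rpow (one_div_ne_zero hp)]
    positivity
  have hsplit : I = I ^ ((p - 2) / p) * I ^ (2 / p) := by
    rw [← Real.rpow_add hI, ← add_div, sub_add_cancel, div_self hp, Real.rpow_one]
  have habsorb : I ^ (2 / p) ≤ K * J ^ (2 / p) := by
    refine le_of_mul_le_mul_left ?_ (Real.rpow_pos_of_pos hI ((p - 2) / p))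
    rw [← hsplit, mul_left_comm]
    exact h
  calc I ^ (1 / p) = (I ^ (2 / p)) ^ ((1 : ℝ) / 2) := by
        rw [← Real.rpow_mul hI.le]
        congr 1
        ring
    _ ≤ (K * J ^ (2 / p)) ^ ((1 : ℝ) / 2) := by gcongr
    _ = K ^ ((1 : ℝ) / 2) * J ^ (1 / p) := by
        rw [Real.mul_rpow hK (by positivity), ← Real.rpow_mul hJ]
        congr 2
        ring

/-- Integration step: a squared-threshold good-λ inequality for the square function
implies `E[S_N^p] ≤ (p/(p-2)) β^p C E[S_N^{p-2} x_N²]` and hence the `L^p` bound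
`‖S_N(x)‖_p ≤ (p β^p C/(p-2))^{1/2} ‖x_N‖_p` for `p > 2`. -/
theorem good_lambda_implies_Lp_bound
    {Ω : Type*} [m0 : MeasurableSpace Ω] {μ : Measure Ω} [IsProbabilityMeasure μ]
    (ℱ : Filtration ℕ m0) (x : ℕ → Ω → ℝ) (hx : Martingale x ℱ μ) (N : ℕ)
    (dx : ℕ → Ω → ℝ) (hdx0 : dx 0 = x 0)
    (hdx : ∀ k : ℕ, dx (k + 1) = x (k + 1) - x k)
    (S : ℕ → Ω → ℝ)
    (hS : ∀ n ω, S n ω = Real.sqrt (∑ k ∈ Finset.range (n + 1), dx k ω ^ 2))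
    (β C : ℝ) (hβ : 1 < β) (hC : 0 < C)
    (hgl : ∀ l : ℝ, 0 < l →
      l ^ 2 * (μ {ω | β * l ≤ S N ω}).toReal
        ≤ C * ∫ ω in {ω | l ≤ S N ω}, x N ω ^ 2 ∂μ)
    (p : ℝ) (hp : 2 < p)
    (hSp : Integrable (fun ω => S N ω ^ p) μ)
    (hxp : Integrable (fun ω => |x N ω| ^ p) μ)
    (hmix : Integrable (fun ω => S N ω ^ (p - 2) * x N ω ^ 2) μ) :
    (∫ ω, S N ω ^ p ∂μ)
        ≤ p / (p - 2) * β ^ p * C * ∫ ω, S N ω ^ (p - 2) * x N ω ^ 2 ∂μ ∧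
    (∫ ω, S N ω ^ p ∂μ) ^ (1 / p)
        ≤ (p * β ^ p * C / (p - 2)) ^ ((1 : ℝ) / 2)
          * (∫ ω, |x N ω| ^ p ∂μ) ^ (1 / p) := by
  have hxm : ∀ n, Measurable (x n) := fun n => ((hx.stronglyMeasurable n).mono (ℱ.le n)).measurable
  have hdxm : ∀ k, Measurable (dx k)
    | 0 => hdx0 ▸ hxm 0
    | k + 1 => hdx k ▸ (hxm (k + 1)).sub (hxm k)
  have hSm : Measurable (S N) := by
    rw [show S N = _ from funext (hS N)]
    exact (Finset.measurable_sum _ fun k _ => (hdxm k).pow_const 2).sqrt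
  have hS0 : 0 ≤ S N := fun ω => (hS N ω).symm ▸ Real.sqrt_nonneg _
  have hfirst := integral_rpow_le_of_goodLambda hSm hS0 ((hxm N).pow_const 2)
    (fun ω => sq_nonneg (x N ω)) (by linarith) hC.le hp hgl hSp hmix
  refine ⟨hfirst, ?_⟩
  rw [show p * β ^ p * C / (p - 2) = p / (p - 2) * β ^ p * C by ring]
  exact rpow_one_div_le_of_le_mul_rpow (by linarith)
    (integral_nonneg fun ω => Real.rpow_nonneg (hS0 ω) p)
    (integral_nonneg fun ω => by positivity) (by positivity)
    (hfirst.trans (mul_le_mul_of_nonneg_left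
      (integral_rpow_sub_two_mul_sq_le hSm hS0 (hxm N) hp hSp hxp) (by positivity)))
end
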